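/- A shape with conjunctive target query q1 ∧ q2 and constraint φ is equivalent to a shape with target q1 and constraint (φ ∧ φ_{q2}) ∨ ¬φ_{q2}: under a total assignment Σ, all nodes in ⟦q1⟧ ∩ ⟦q2⟧ evaluate φ to 1 if and only if all nodes in ⟦q1⟧ evaluate (φ ∧ φ_{q2}) ∨ ¬φ_{q2} to 1, where φ_{q2} is a constraint such that ⟦φ_{q2}⟧_n = 1 iff n ∈ ⟦q2⟧ (and 0 otherwise). -/

import Mathlib

/-- The Boolean/propositional fragment of ProGS node constraints:
φ_N ::= ⊤ | s_N | n | l_N | ¬φ_N | φ₁ ∧ φ₂. -/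
inductive NConstr (SN Lab Node : Type*) where
  | top
  | shape (s : SN)
  | nid (n : Node)
  | lab (l : Lab)
  | neg (φ : NConstr SN Lab Node)
  | and (φ₁ φ₂ : NConstr SN Lab Node)

open Classical

/-- Three-valued ProGS evaluation of node constraints into the rationals
(intended values 0, 1/2, 1):  ⟦⊤⟧ = 1, ⟦s⟧_n = Σ(s(n)), ⟦n'⟧_n = [n' = n],
⟦l⟧_n = [l ∈ λ(n)], ⟦¬φ⟧ = 1 − ⟦φ⟧, ⟦φ₁ ∧ φ₂⟧ = min. Here `nlab` is the
labelling function λ of the graph and `A` is the partial assignment Σ. -/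
noncomputable def evalN {SN Lab Node : Type*} (nlab : Node → Set Lab)
    (A : SN → Node → ℚ) : NConstr SN Lab Node → Node → ℚ
  | .top, _ => 1
  | .shape s, n => A s n
  | .nid n', n => if n' = n then 1 else 0
  | .lab l, n => if l ∈ nlab n then 1 else 0
  | .neg φ, n => 1 - evalN nlab A φ n
  | .and φ₁ φ₂, n => min (evalN nlab A φ₁ n) (evalN nlab A φ₂ n)

/-- Disjunction as syntactic sugar: φ₁ ∨ φ₂ := ¬(¬φ₁ ∧ ¬φ₂). -/
def NConstr.or {SN Lab Node : Type*} (φ₁ φ₂ : NConstr SN Lab Node) :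
    NConstr SN Lab Node :=
  .neg (.and (.neg φ₁) (.neg φ₂))

/-
Under a total assignment every constraint evaluates to 0 or 1, and `(φ ∧ ψ) ∨ ¬ψ` evaluates
to `max (min ⟦φ⟧ ⟦ψ⟧) (1 - ⟦ψ⟧)`, which on two-valued arguments is the material implication
`⟦ψ⟧ = 1 → ⟦φ⟧ = 1`. With `ψ = φ_{q₂}` this turns the condition on `Q₁` into the condition
on `Q₁ ∩ Q₂`.
-/

namespace NConstr

variable {SN Lab Node : Type*} (nlab : Node → Set Lab) (A : SN → Node → ℚ)

theorem evalN_or (φ₁ φ₂ : NConstr SN Lab Node) (n : Node) :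
    evalN nlab A (φ₁.or φ₂) n = max (evalN nlab A φ₁ n) (evalN nlab A φ₂ n) := by
  simp only [NConstr.or, evalN, min_sub_sub_left, sub_sub_cancel]

variable {A}

theorem evalN_eq_zero_or_eq_one (htot : ∀ s n, A s n = 0 ∨ A s n = 1)
    (φ : NConstr SN Lab Node) (n : Node) :
    evalN nlab A φ n = 0 ∨ evalN nlab A φ n = 1 := by
  induction φ generalizing n with
  | top => exact .inr rfl
  | shape s => exact htot s n
  | nid n' => by_cases h : n' = n <;> simp [evalN, h]
  | lab l => by_cases h : l ∈ nlab n <;> simp [evalN, h]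
  | neg φ ih => rcases ih n with h | h <;> simp [evalN, h]
  | and φ₁ φ₂ ih₁ ih₂ =>
    rcases ih₁ n with h₁ | h₁ <;> rcases ih₂ n with h₂ | h₂ <;> simp [evalN, h₁, h₂]

theorem evalN_and_or_neg_eq_one_iff (htot : ∀ s n, A s n = 0 ∨ A s n = 1)
    (φ ψ : NConstr SN Lab Node) (n : Node) :
    evalN nlab A ((φ.and ψ).or ψ.neg) n = 1 ↔
      (evalN nlab A ψ n = 1 → evalN nlab A φ n = 1) := by
  rw [evalN_or]
  rcases evalN_eq_zero_or_eq_one nlab htot φ n with hφ | hφ <;>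
    rcases evalN_eq_zero_or_eq_one nlab htot ψ n with hψ | hψ <;>
    simp [evalN, hφ, hψ]

end NConstr

/-- a shape with conjunctive target query q₁ ∧ q₂ and constraint
φ is equivalent to a shape with target q₁ and constraint (φ ∧ φ_{q₂}) ∨ ¬φ_{q₂}.
Here Q₁ = ⟦q₁⟧ and Q₂ = ⟦q₂⟧ are the target query evaluations, Σ is total
(two-valued), and φ_{q₂} exactly characterizes membership in Q₂. -/
theorem target_conj_sugar {SN Lab Node : Type*} (nlab : Node → Set Lab)
    (A : SN → Node → ℚ) (htot : ∀ s n, A s n = 0 ∨ A s n = 1)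
    (Q₁ Q₂ : Set Node) (φ φq₂ : NConstr SN Lab Node)
    (hchar : ∀ n, evalN nlab A φq₂ n = 1 ↔ n ∈ Q₂) :
    (∀ n ∈ Q₁ ∩ Q₂, evalN nlab A φ n = 1) ↔
      (∀ n ∈ Q₁, evalN nlab A ((NConstr.and φ φq₂).or (NConstr.neg φq₂)) n = 1) := by
  simp only [NConstr.evalN_and_or_neg_eq_one_iff nlab htot, hchar, Set.mem_inter_iff,
    and_imp]
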